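/- arXiv:1912.04330 — 2 statements merged into one kernel-verified Lean document; each statement's English description precedes it below -/
import Mathlib

section
/- Let F be a totally real number field, i.e., every ring homomorphism F → ℂ has image contained in ℝ, and let S be the set of real embeddings of F. Then there exist a primitive element u of F (i.e., ℚ(u) = F) and an embedding τ ∈ S such that τ(u) > 0 and σ(u) < 0 for every σ ∈ S with σ ≠ τ. -/
/-!
Take a primitive element `α`. A real embedding is determined by its value at `α`, so the
values `σ α` are pairwise distinct; let `τ` be the embedding with the largest one and subtract
from `α` a rational number lying strictly between `τ α` and all other values `σ α`.
Translating by a rational number does not change the field generated.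
-/

open IntermediateField

theorem IntermediateField.adjoin_simple_sub_algebraMap {K E : Type*} [Field K] [Field E]
    [Algebra K E] (x : E) (c : K) : K⟮x - algebraMap K E c⟯ = K⟮x⟯ := by
  have hc (L : IntermediateField K E) : algebraMap K E c ∈ L := L.algebraMap_mem c
  apply le_antisymm <;> rw [adjoin_simple_le_iff]
  · exact sub_mem (mem_adjoin_simple_self K x) (hc _)
  · simpa using add_mem (mem_adjoin_simple_self K (x - algebraMap K E c)) (hc _)

theorem RingHom.ext_of_adjoin_rat_eq_top {E K : Type*} [Field E] [CharZero E]
    [Algebra.IsAlgebraic ℚ E] [DivisionRing K] [CharZero K] {α : E} (hα : ℚ⟮α⟯ = ⊤) {σ σ' : E →+* K} (h : σ α = σ' α) : σ = σ' := by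
  have hα' : Algebra.adjoin ℚ {α} = ⊤ := by
    rw [← adjoin_simple_toSubalgebra_of_isAlgebraic (Algebra.IsAlgebraic.isAlgebraic α), hα,
      top_toSubalgebra]
  have hext := AlgHom.ext_of_adjoin_eq_top hα' (φ₁ := σ.toRatAlgHom) (φ₂ := σ'.toRatAlgHom)
    (by simpa using h)
  simpa using congrArg AlgHom.toRingHom hext

theorem exists_rat_lt_and_forall_ne_lt {ι K : Type*} [Finite ι] [Nonempty ι] [Field K]
    [LinearOrder K] [IsStrictOrderedRing K] [Archimedean K] {f : ι → K}
    (hf : Function.Injective f) : ∃ (i : ι) (q : ℚ), (q : K) < f i ∧ ∀ j ≠ i, f j < q := by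
  classical
  have := Fintype.ofFinite ι
  obtain ⟨i, hi⟩ := Finite.exists_max f
  -- `f i - 1` keeps the set of competitors nonempty when `ι` is a singleton
  let others : Finset K := insert (f i - 1) ((Finset.univ.erase i).image f)
  have hlt : others.max' (Finset.insert_nonempty _ _) < f i := by
    simp only [Finset.max'_lt_iff, others, Finset.mem_insert, Finset.mem_image,
      Finset.mem_erase, Finset.mem_univ, and_true]
    rintro _ (rfl | ⟨j, hj, rfl⟩)
    · linarith
    · exact (hi j).lt_of_ne (hf.ne hj)
  obtain ⟨q, hq, hqi⟩ := exists_rat_btwn hlt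
  refine ⟨i, q, hqi, fun j hj => lt_of_le_of_lt (others.le_max' _ ?_) hq⟩
  exact Finset.mem_insert_of_mem (Finset.mem_image_of_mem f (by simpa using hj))

theorem NumberField.nonempty_ringHom_real_of_forall_im_eq_zero {F : Type*} [Field F]
    [NumberField F] (htr : ∀ (φ : F →+* ℂ) (x : F), (φ x).im = 0) : Nonempty (F →+* ℝ) := by
  obtain ⟨φ⟩ : Nonempty (F →+* ℂ) := inferInstance
  have hφ : ComplexEmbedding.IsReal φ :=
    ComplexEmbedding.isReal_iff.mpr <| RingHom.ext fun x => Complex.conj_eq_iff_im.mpr (htr φ x)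
  exact ⟨hφ.embedding⟩

/-- A totally real number field `F` has a primitive element `u` and a real embedding `τ`
with `τ u > 0` and `σ u < 0` for every other real embedding `σ`. -/
theorem stmt_1 (F : Type*) [Field F] [NumberField F]
    (htr : ∀ (φ : F →+* ℂ) (x : F), (φ x).im = 0) :
    ∃ (u : F) (τ : F →+* ℝ), IntermediateField.adjoin ℚ {u} = ⊤ ∧
      0 < τ u ∧ ∀ σ : F →+* ℝ, σ ≠ τ → σ u < 0 := by
  have : Nonempty (F →+* ℝ) := NumberField.nonempty_ringHom_real_of_forall_im_eq_zero htr
  obtain ⟨α, hα⟩ := Field.exists_primitive_element ℚ F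
  obtain ⟨τ, q, hqτ, hqσ⟩ := exists_rat_lt_and_forall_ne_lt
    (f := fun σ : F →+* ℝ => σ α) fun σ σ' h => RingHom.ext_of_adjoin_rat_eq_top hα h
  refine ⟨α - algebraMap ℚ F q, τ, by rwa [adjoin_simple_sub_algebraMap], ?_, fun σ hσ => ?_⟩
  · simpa using hqτ
  · simpa using hqσ σ hσ
end

section
/- For every integer n ≥ 6, the coefficient of X^{2n−3} in the polynomial (1 + X) · ∏_{i=1}^{n−1} (1 + X^{4i−1}) ∈ ℤ[X] is nonzero if and only if n ∉ {6, 8, 10}. -/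
/-!
Expanding the product, the coefficient of `X^m` in `∏_{k ∈ S} (1 + X^k)` is the number of subsets
of `S` with sum `m`; here `S = {1} ∪ {4i - 1 | 1 ≤ i < n}`. For odd `n = 2m + 1` the target
`2n - 3 = 4m - 1` itself lies in `S`; for even `n = 2m ≥ 12` it is `3 + 7 + (4(m - 3) - 1)`, three
distinct elements of `S` since `m - 3 ≥ 3`. For `n = 6, 8, 10` a finite check rules out every subset.
-/

open Polynomial Finset

theorem coeff_prod_one_add_X_pow {ι R : Type*} [CommSemiring R] (s : Finset ι) (e : ι → ℕ)
    (m : ℕ) :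
    (∏ i ∈ s, (1 + X ^ e i : R[X])).coeff m = #{t ∈ s.powerset | ∑ i ∈ t, e i = m} := by
  classical
  simp only [prod_one_add, prod_pow_eq_pow_sum, finsetSum_coeff, coeff_X_pow, card_filter,
    Nat.cast_sum, Nat.cast_ite, Nat.cast_one, Nat.cast_zero, eq_comm]

def factorExponents (n : ℕ) : Finset ℕ :=
  insert 1 ((Icc 1 (n - 1)).image fun i => 4 * i - 1)

theorem one_add_X_mul_prod_eq_prod_factorExponents {R : Type*} [CommSemiring R] (n : ℕ) :
    ((1 + X) * ∏ i ∈ Icc 1 (n - 1), (1 + X ^ (4 * i - 1)) : R[X]) =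
      ∏ k ∈ factorExponents n, (1 + X ^ k) := by
  have one_notMem : 1 ∉ (Icc 1 (n - 1)).image fun i => 4 * i - 1 := by
    simp only [mem_image, mem_Icc, not_exists, not_and]
    omega
  rw [factorExponents, prod_insert one_notMem, pow_one, prod_image]
  intro i _ j _ h
  simp only at h
  omega

theorem exists_subset_factorExponents_sum_eq {n : ℕ} (hn : 6 ≤ n) (h6 : n ≠ 6) (h8 : n ≠ 8)
    (h10 : n ≠ 10) : ∃ t ⊆ factorExponents n, ∑ k ∈ t, k = 2 * n - 3 := by
  have mem : ∀ i, 1 ≤ i → i < n → 4 * i - 1 ∈ factorExponents n := fun i h1 h2 =>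
    mem_insert_of_mem (mem_image.2 ⟨i, mem_Icc.2 ⟨h1, by omega⟩, rfl⟩)
  rcases Nat.even_or_odd' n with ⟨m, rfl | rfl⟩
  · refine ⟨{4 * 1 - 1, 4 * 2 - 1, 4 * (m - 3) - 1}, ?_, ?_⟩
    · simp only [insert_subset_iff, singleton_subset_iff]
      exact ⟨mem 1 le_rfl (by omega), mem 2 (by omega) (by omega), mem _ (by omega) (by omega)⟩
    · rw [sum_insert (by simp; omega), sum_insert (by simp; omega), sum_singleton]
      omega
  · exact ⟨{4 * m - 1}, singleton_subset_iff.2 (mem m (by omega) (by omega)), by simp; omega⟩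

theorem sum_ne_of_mem_powerset_factorExponents :
    ∀ n ∈ ({6, 8, 10} : Finset ℕ), ∀ t ∈ (factorExponents n).powerset, ∑ k ∈ t, k ≠ 2 * n - 3 := by
  decide +kernel

/-- For `n ≥ 6`, the coefficient of `X^{2n-3}` in
`(1+X)(1+X³)(1+X⁷)⋯(1+X^{4n-5})` is nonzero iff `n ∉ {6, 8, 10}`. -/
theorem stmt_9 (n : ℕ) (hn : 6 ≤ n) :
    (((1 + Polynomial.X) * ∏ i ∈ Finset.Icc 1 (n - 1),
        (1 + Polynomial.X ^ (4 * i - 1)) : Polynomial ℤ).coeff (2 * n - 3) ≠ 0) ↔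
      n ∉ ({6, 8, 10} : Set ℕ) := by
  rw [one_add_X_mul_prod_eq_prod_factorExponents, coeff_prod_one_add_X_pow, Nat.cast_ne_zero,
    card_ne_zero, filter_nonempty_iff]
  simp only [Set.mem_insert_iff, Set.mem_singleton_iff, not_or]
  constructor
  · rintro ⟨t, ht, hsum⟩
    refine ⟨?_, ?_, ?_⟩ <;> rintro rfl <;>
      exact sum_ne_of_mem_powerset_factorExponents _ (by simp) t ht hsum
  · rintro ⟨h6, h8, h10⟩
    obtain ⟨t, ht, hsum⟩ := exists_subset_factorExponents_sum_eq hn h6 h8 h10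
    exact ⟨t, mem_powerset.2 ht, hsum⟩
end
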